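/- The unique solution ρ of the integral equation ∑_{α=−ℓ+1/2}^{ℓ−1/2} Φ'(x; 2i(α+ℓ)ηt) = −2πρ(x) + ∫_{−1/2}^{1/2} (∑_{m=1}^{2ℓ−1} Φ'(x−y; 2imηt) + ∑_{m=0}^{2ℓ−1} Φ'(x−y; 2i(m+1)ηt)) ρ(y) dy is ρ(x) = ∑_{n∈ℤ} e^{2πinx}/(2 cosh(2πnηt)). -/

import Mathlib

open Real MeasureTheory intervalIntegral

/-- Fourier series for `Φ'(x; iμt)`:
`−2π(1 + 2∑_{n≥1} (sinh(πn(1−2μ)t)/sinh(πnt)) cos(2πnx))`. -/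
noncomputable def PhiDeriv (μ t : ℝ) (x : ℝ) : ℝ :=
  -2 * π * (1 + 2 * ∑' n : ℕ,
    Real.sinh (π * (n + 1) * (1 - 2 * μ) * t) / Real.sinh (π * (n + 1) * t) *
      Real.cos (2 * π * (n + 1) * x))

/-- The kernel `K(x) = ∑_{m=1}^{2ℓ−1} Φ'(x; 2imηt) + ∑_{m=0}^{2ℓ−1} Φ'(x; 2i(m+1)ηt)`,
with `L = 2ℓ`. -/
noncomputable def Kker (L : ℕ) (η t : ℝ) (x : ℝ) : ℝ :=
  (∑ m ∈ Finset.range (L - 1), PhiDeriv (2 * (m + 1) * η) t x) +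
    ∑ m ∈ Finset.range L, PhiDeriv (2 * (m + 1) * η) t x

/-- The claimed solution `ρ(x) = ∑_{n∈ℤ} e^{2πinx}/(2 cosh(2πnηt))`
(a real-valued series, as the terms for `n` and `−n` pair up). -/
noncomputable def rhoSol (η t : ℝ) (x : ℝ) : ℝ :=
  ∑' n : ℤ, Real.cos (2 * π * n * x) / (2 * Real.cosh (2 * π * n * η * t))

/-- The ground-state integral equation
`∑_{α=−ℓ+1/2}^{ℓ−1/2} Φ'(x; 2i(α+ℓ)ηt) = −2πρ(x) + ∫_{−1/2}^{1/2} K(x−y) ρ(y) dy`,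
with `L = 2ℓ`. -/
def SolvesBetheEq (L : ℕ) (η t : ℝ) (ρ : ℝ → ℝ) : Prop :=
  ∀ x : ℝ,
    (∑ j ∈ Finset.range L, PhiDeriv ((2 * j + 1) * η) t x) =
      -2 * π * ρ x + ∫ y in (-(1 / 2) : ℝ)..(1 / 2), Kker L η t (x - y) * ρ y


namespace RhoAux


lemma intC (k : ℤ) : (∫ y in (-(1/2):ℝ)..(1/2), Real.cos (2*π*k*y)) = if k = 0 then 1 else 0 := by
  rcases eq_or_ne k 0 with hk | hk
  · simp [hk]; norm_num
  · have hk' : (k:ℝ) ≠ 0 := Int.cast_ne_zero.mpr hk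
    have hc : (2*π*(k:ℝ)) ≠ 0 := by
      have := Real.pi_ne_zero; positivity
    rw [if_neg hk]
    rw [intervalIntegral.integral_comp_mul_left (fun u => Real.cos u) hc, integral_cos]
    have h1 : (2*π*(k:ℝ)) * (1/2) = k * π := by ring
    have h2 : (2*π*(k:ℝ)) * (-(1/2)) = -(k * π) := by ring
    rw [h1, h2, Real.sin_neg, Real.sin_int_mul_pi]
    simp

lemma intS (k : ℤ) : (∫ y in (-(1/2):ℝ)..(1/2), Real.sin (2*π*k*y)) = 0 := by
  rcases eq_or_ne k 0 with hk | hk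
  · simp [hk]
  · have hk' : (k:ℝ) ≠ 0 := Int.cast_ne_zero.mpr hk
    have hc : (2*π*(k:ℝ)) ≠ 0 := by
      have := Real.pi_ne_zero; positivity
    rw [intervalIntegral.integral_comp_mul_left (fun u => Real.sin u) hc, integral_sin]
    have h2 : (2*π*(k:ℝ)) * (-(1/2)) = -((2*π*(k:ℝ)) * (1/2)) := by ring
    rw [h2, Real.cos_neg]
    simp

lemma intCC (k l : ℤ) : (∫ y in (-(1/2):ℝ)..(1/2), Real.cos (2*π*k*y) * Real.cos (2*π*l*y))
    = ((if k - l = 0 then 1 else 0) + (if k + l = 0 then 1 else 0)) / 2 := by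
  have h : ∀ y : ℝ, Real.cos (2*π*k*y) * Real.cos (2*π*l*y)
      = (Real.cos (2*π*((k-l:ℤ):ℝ)*y) + Real.cos (2*π*((k+l:ℤ):ℝ)*y)) / 2 := by
    intro y
    have e1 : (2*π*((k-l:ℤ):ℝ)*y) = 2*π*k*y - 2*π*l*y := by push_cast; ring
    have e2 : (2*π*((k+l:ℤ):ℝ)*y) = 2*π*k*y + 2*π*l*y := by push_cast; ring
    rw [e1, e2, Real.cos_sub, Real.cos_add]; ring
  rw [intervalIntegral.integral_congr (fun y _ => h y)]
  rw [intervalIntegral.integral_div]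
  rw [intervalIntegral.integral_add
    ((by continuity : Continuous fun y : ℝ => Real.cos (2*π*((k-l:ℤ):ℝ)*y)).intervalIntegrable _ _)
    ((by continuity : Continuous fun y : ℝ => Real.cos (2*π*((k+l:ℤ):ℝ)*y)).intervalIntegrable _ _)]
  rw [intC (k-l), intC (k+l)]

lemma intSC (k l : ℤ) : (∫ y in (-(1/2):ℝ)..(1/2), Real.sin (2*π*k*y) * Real.cos (2*π*l*y)) = 0 := by
  have h : ∀ y : ℝ, Real.sin (2*π*k*y) * Real.cos (2*π*l*y)
      = (Real.sin (2*π*((k+l:ℤ):ℝ)*y) + Real.sin (2*π*((k-l:ℤ):ℝ)*y)) / 2 := by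
    intro y
    have e1 : (2*π*((k-l:ℤ):ℝ)*y) = 2*π*k*y - 2*π*l*y := by push_cast; ring
    have e2 : (2*π*((k+l:ℤ):ℝ)*y) = 2*π*k*y + 2*π*l*y := by push_cast; ring
    rw [e1, e2, Real.sin_sub, Real.sin_add]; ring
  rw [intervalIntegral.integral_congr (fun y _ => h y)]
  rw [intervalIntegral.integral_div]
  rw [intervalIntegral.integral_add
    ((by continuity : Continuous fun y : ℝ => Real.sin (2*π*((k+l:ℤ):ℝ)*y)).intervalIntegrable _ _)
    ((by continuity : Continuous fun y : ℝ => Real.sin (2*π*((k-l:ℤ):ℝ)*y)).intervalIntegrable _ _)]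
  rw [intS (k+l), intS (k-l)]
  norm_num

lemma intSS (k l : ℤ) : (∫ y in (-(1/2):ℝ)..(1/2), Real.sin (2*π*k*y) * Real.sin (2*π*l*y))
    = ((if k - l = 0 then 1 else 0) - (if k + l = 0 then 1 else 0)) / 2 := by
  have h : ∀ y : ℝ, Real.sin (2*π*k*y) * Real.sin (2*π*l*y)
      = (Real.cos (2*π*((k-l:ℤ):ℝ)*y) - Real.cos (2*π*((k+l:ℤ):ℝ)*y)) / 2 := by
    intro y
    have e1 : (2*π*((k-l:ℤ):ℝ)*y) = 2*π*k*y - 2*π*l*y := by push_cast; ring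
    have e2 : (2*π*((k+l:ℤ):ℝ)*y) = 2*π*k*y + 2*π*l*y := by push_cast; ring
    rw [e1, e2, Real.cos_sub, Real.cos_add]; ring
  rw [intervalIntegral.integral_congr (fun y _ => h y)]
  rw [intervalIntegral.integral_div]
  rw [intervalIntegral.integral_sub
    ((by continuity : Continuous fun y : ℝ => Real.cos (2*π*((k-l:ℤ):ℝ)*y)).intervalIntegrable _ _)
    ((by continuity : Continuous fun y : ℝ => Real.cos (2*π*((k+l:ℤ):ℝ)*y)).intervalIntegrable _ _)]
  rw [intC (k-l), intC (k+l)]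



lemma nintC (n : ℕ) : (∫ y in (-(1/2):ℝ)..(1/2), Real.cos (2*π*(n+1)*y)) = 0 := by
  have e : ∀ y:ℝ, Real.cos (2*π*((n:ℝ)+1)*y) = Real.cos (2*π*(((n+1:ℕ):ℤ):ℝ)*y) := by
    intro y; push_cast; ring_nf
  rw [intervalIntegral.integral_congr (fun y _ => e y), intC]
  simp; omega

lemma nintS (n : ℕ) : (∫ y in (-(1/2):ℝ)..(1/2), Real.sin (2*π*(n+1)*y)) = 0 := by
  have e : ∀ y:ℝ, Real.sin (2*π*((n:ℝ)+1)*y) = Real.sin (2*π*(((n+1:ℕ):ℤ):ℝ)*y) := by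
    intro y; push_cast; ring_nf
  rw [intervalIntegral.integral_congr (fun y _ => e y), intS]

lemma nCC (m n : ℕ) : (∫ y in (-(1/2):ℝ)..(1/2), Real.cos (2*π*(m+1)*y) * Real.cos (2*π*(n+1)*y))
    = if n = m then 1/2 else 0 := by
  have e : ∀ y:ℝ, Real.cos (2*π*((m:ℝ)+1)*y) * Real.cos (2*π*((n:ℝ)+1)*y)
      = Real.cos (2*π*(((m+1:ℕ):ℤ):ℝ)*y) * Real.cos (2*π*(((n+1:ℕ):ℤ):ℝ)*y) := by
    intro y; push_cast; ring_nf
  rw [intervalIntegral.integral_congr (fun y _ => e y), intCC]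
  rcases eq_or_ne n m with h | h
  · subst h; rw [if_pos rfl, sub_self, if_pos rfl, if_neg (by omega : ¬((n+1:ℕ):ℤ) + ((n+1:ℕ):ℤ) = 0)]; norm_num
  · rw [if_neg h, if_neg (by omega), if_neg (by omega)]; norm_num

lemma nSC (m n : ℕ) : (∫ y in (-(1/2):ℝ)..(1/2), Real.sin (2*π*(m+1)*y) * Real.cos (2*π*(n+1)*y)) = 0 := by
  have e : ∀ y:ℝ, Real.sin (2*π*((m:ℝ)+1)*y) * Real.cos (2*π*((n:ℝ)+1)*y)
      = Real.sin (2*π*(((m+1:ℕ):ℤ):ℝ)*y) * Real.cos (2*π*(((n+1:ℕ):ℤ):ℝ)*y) := by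
    intro y; push_cast; ring_nf
  rw [intervalIntegral.integral_congr (fun y _ => e y), intSC]

lemma nCS (m n : ℕ) : (∫ y in (-(1/2):ℝ)..(1/2), Real.cos (2*π*(m+1)*y) * Real.sin (2*π*(n+1)*y)) = 0 := by
  have e : ∀ y:ℝ, Real.cos (2*π*((m:ℝ)+1)*y) * Real.sin (2*π*((n:ℝ)+1)*y)
      = Real.sin (2*π*((n:ℝ)+1)*y) * Real.cos (2*π*((m:ℝ)+1)*y) := fun y => mul_comm _ _
  rw [intervalIntegral.integral_congr (fun y _ => e y), nSC]

lemma nSS (m n : ℕ) : (∫ y in (-(1/2):ℝ)..(1/2), Real.sin (2*π*(m+1)*y) * Real.sin (2*π*(n+1)*y))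
    = if n = m then 1/2 else 0 := by
  have e : ∀ y:ℝ, Real.sin (2*π*((m:ℝ)+1)*y) * Real.sin (2*π*((n:ℝ)+1)*y)
      = Real.sin (2*π*(((m+1:ℕ):ℤ):ℝ)*y) * Real.sin (2*π*(((n+1:ℕ):ℤ):ℝ)*y) := by
    intro y; push_cast; ring_nf
  rw [intervalIntegral.integral_congr (fun y _ => e y), intSS]
  rcases eq_or_ne n m with h | h
  · subst h; rw [if_pos rfl, sub_self, if_pos rfl, if_neg (by omega : ¬((n+1:ℕ):ℤ) + ((n+1:ℕ):ℤ) = 0)]; norm_num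
  · rw [if_neg h, if_neg (by omega), if_neg (by omega)]; norm_num

lemma swap_integral {ι : Type*} [Countable ι] {F : ι → ℝ → ℝ} (hcont : ∀ i, Continuous (F i))
    {u : ι → ℝ} (hu : Summable u)
    (hb : ∀ i, ∀ y ∈ Set.Ioc (-(1/2):ℝ) (1/2), |F i y| ≤ u i) :
    (∫ y in (-(1/2):ℝ)..(1/2), ∑' i, F i y) = ∑' i, ∫ y in (-(1/2):ℝ)..(1/2), F i y := by
  have hle : (-(1/2):ℝ) ≤ 1/2 := by norm_num
  rw [intervalIntegral.integral_of_le hle]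
  have h1 : ∀ i, IntegrableOn (F i) (Set.Ioc (-(1/2):ℝ) (1/2)) := fun i =>
    (hcont i).integrableOn_Ioc
  have h2 : Summable fun i => ∫ y in Set.Ioc (-(1/2):ℝ) (1/2), ‖F i y‖ := by
    apply Summable.of_nonneg_of_le (fun i => integral_nonneg (fun y => norm_nonneg _)) _ hu
    intro i
    have hconst : IntegrableOn (fun _ : ℝ => u i) (Set.Ioc (-(1/2):ℝ) (1/2)) :=
      integrableOn_const measure_Ioc_lt_top.ne
    have hmono : (∫ y in Set.Ioc (-(1/2):ℝ) (1/2), ‖F i y‖)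
        ≤ ∫ _ in Set.Ioc (-(1/2):ℝ) (1/2), u i := by
      apply setIntegral_mono_on (h1 i).norm hconst measurableSet_Ioc
      intro y hy; simpa using hb i y hy
    have : (∫ _ in Set.Ioc (-(1/2):ℝ) (1/2), u i) = u i := by
      rw [setIntegral_const]
      simp [Real.volume_Ioc]
      norm_num
    linarith
  rw [← MeasureTheory.integral_tsum_of_summable_integral_norm h1 h2]
  exact tsum_congr fun i => (intervalIntegral.integral_of_le hle).symm

lemma cont_series {p q : ℕ → ℝ} (hp : Summable fun n => |p n|) (hq : Summable fun n => |q n|) :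
    Continuous (fun x : ℝ => ∑' n : ℕ,
      (p n * Real.cos (2*π*(n+1)*x) + q n * Real.sin (2*π*(n+1)*x))) := by
  apply continuous_tsum (u := fun n => |p n| + |q n|)
  · intro i; fun_prop
  · exact hp.add hq
  · intro n x
    have h1 : |p n * Real.cos (2*π*(n+1)*x)| ≤ |p n| := by
      rw [abs_mul]
      calc |p n| * |Real.cos (2*π*(n+1)*x)| ≤ |p n| * 1 :=
        mul_le_mul_of_nonneg_left (Real.abs_cos_le_one _) (abs_nonneg _)
      _ = |p n| := mul_one _
    have h2 : |q n * Real.sin (2*π*(n+1)*x)| ≤ |q n| := by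
      rw [abs_mul]
      calc |q n| * |Real.sin (2*π*(n+1)*x)| ≤ |q n| * 1 :=
        mul_le_mul_of_nonneg_left (Real.abs_sin_le_one _) (abs_nonneg _)
      _ = |q n| := mul_one _
    calc ‖p n * Real.cos (2*π*(n+1)*x) + q n * Real.sin (2*π*(n+1)*x)‖
        ≤ |p n * Real.cos (2*π*(n+1)*x)| + |q n * Real.sin (2*π*(n+1)*x)| := abs_add_le _ _
    _ ≤ |p n| + |q n| := add_le_add h1 h2



noncomputable def I0 (f : ℝ → ℝ) : ℝ := ∫ y in (-(1/2):ℝ)..(1/2), f y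
noncomputable def Cc (f : ℝ → ℝ) (m : ℕ) : ℝ :=
  ∫ y in (-(1/2):ℝ)..(1/2), Real.cos (2*π*(m+1)*y) * f y
noncomputable def Cs (f : ℝ → ℝ) (m : ℕ) : ℝ :=
  ∫ y in (-(1/2):ℝ)..(1/2), Real.sin (2*π*(m+1)*y) * f y

lemma trig_term_bound (p q : ℕ → ℝ) (n : ℕ) (y : ℝ) :
    |p n * Real.cos (2*π*(n+1)*y) + q n * Real.sin (2*π*(n+1)*y)| ≤ |p n| + |q n| := by
  have h1 : |p n * Real.cos (2*π*(n+1)*y)| ≤ |p n| := by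
    rw [abs_mul]
    calc |p n| * |Real.cos (2*π*(n+1)*y)| ≤ |p n| * 1 :=
      mul_le_mul_of_nonneg_left (Real.abs_cos_le_one _) (abs_nonneg _)
    _ = |p n| := mul_one _
  have h2 : |q n * Real.sin (2*π*(n+1)*y)| ≤ |q n| := by
    rw [abs_mul]
    calc |q n| * |Real.sin (2*π*(n+1)*y)| ≤ |q n| * 1 :=
      mul_le_mul_of_nonneg_left (Real.abs_sin_le_one _) (abs_nonneg _)
    _ = |q n| := mul_one _
  calc |p n * Real.cos (2*π*(n+1)*y) + q n * Real.sin (2*π*(n+1)*y)|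
      ≤ |p n * Real.cos (2*π*(n+1)*y)| + |q n * Real.sin (2*π*(n+1)*y)| := abs_add_le _ _
  _ ≤ |p n| + |q n| := add_le_add h1 h2

section Fdata

variable {c0 : ℝ} {p q : ℕ → ℝ} {f : ℝ → ℝ}

/-- Integral against a weight `w` (cos_m, sin_m or 1) of a function given by a trig series. -/
lemma int_weight (hp : Summable fun n => |p n|) (hq : Summable fun n => |q n|)
    (hfx : ∀ x, f x = c0 + 2 * ∑' n : ℕ,
      (p n * Real.cos (2*π*(n+1)*x) + q n * Real.sin (2*π*(n+1)*x)))
    {w : ℝ → ℝ} (hw : Continuous w) (hw1 : ∀ y, |w y| ≤ 1) :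
    (∫ y in (-(1/2):ℝ)..(1/2), w y * f y)
      = c0 * (∫ y in (-(1/2):ℝ)..(1/2), w y)
        + 2 * ∑' n : ℕ, (p n * (∫ y in (-(1/2):ℝ)..(1/2), w y * Real.cos (2*π*(n+1)*y))
            + q n * (∫ y in (-(1/2):ℝ)..(1/2), w y * Real.sin (2*π*(n+1)*y))) := by
  have hG : Continuous (fun x : ℝ => ∑' n : ℕ,
      (p n * Real.cos (2*π*(n+1)*x) + q n * Real.sin (2*π*(n+1)*x))) := cont_series hp hq
  set G := fun x : ℝ => ∑' n : ℕ,
      (p n * Real.cos (2*π*(n+1)*x) + q n * Real.sin (2*π*(n+1)*x)) with hGdef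
  have key : ∀ y : ℝ, w y * f y = c0 * w y + 2 * (w y * G y) := by
    intro y; rw [hfx y]; ring
  rw [intervalIntegral.integral_congr (fun y _ => key y)]
  rw [intervalIntegral.integral_add (f := fun y => c0 * w y) (g := fun y => 2 * (w y * G y))
      ((continuous_const.mul hw).intervalIntegrable _ _)
      ((continuous_const.mul (hw.mul hG)).intervalIntegrable _ _),
    intervalIntegral.integral_const_mul, intervalIntegral.integral_const_mul]
  congr 1
  congr 1
  have hswap : (∫ y in (-(1/2):ℝ)..(1/2), w y * G y)
      = ∑' n : ℕ, ∫ y in (-(1/2):ℝ)..(1/2),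
          w y * (p n * Real.cos (2*π*(n+1)*y) + q n * Real.sin (2*π*(n+1)*y)) := by
    have e : ∀ y : ℝ, w y * G y = ∑' n : ℕ,
        w y * (p n * Real.cos (2*π*(n+1)*y) + q n * Real.sin (2*π*(n+1)*y)) := by
      intro y; rw [hGdef, tsum_mul_left]
    rw [intervalIntegral.integral_congr (fun y _ => e y)]
    apply swap_integral (fun n => by fun_prop) (hp.add hq)
    intro n y _
    rw [abs_mul]
    calc |w y| * |p n * Real.cos (2*π*(n+1)*y) + q n * Real.sin (2*π*(n+1)*y)|
        ≤ 1 * (|p n| + |q n|) :=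
          mul_le_mul (hw1 y) (trig_term_bound p q n y)
            (abs_nonneg _) zero_le_one
    _ = |p n| + |q n| := one_mul _
  rw [hswap]
  apply tsum_congr
  intro n
  have e2 : ∀ y : ℝ, w y * (p n * Real.cos (2*π*(n+1)*y) + q n * Real.sin (2*π*(n+1)*y))
      = p n * (w y * Real.cos (2*π*(n+1)*y)) + q n * (w y * Real.sin (2*π*(n+1)*y)) := by
    intro y; ring
  rw [intervalIntegral.integral_congr (fun y _ => e2 y),
    intervalIntegral.integral_add (f := fun y => p n * (w y * Real.cos (2*π*(n+1)*y)))
        (g := fun y => q n * (w y * Real.sin (2*π*(n+1)*y)))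
        ((continuous_const.mul (by fun_prop)).intervalIntegrable _ _)
      ((continuous_const.mul (by fun_prop)).intervalIntegrable _ _),
    intervalIntegral.integral_const_mul, intervalIntegral.integral_const_mul]

lemma I0_eq (hp : Summable fun n => |p n|) (hq : Summable fun n => |q n|)
    (hfx : ∀ x, f x = c0 + 2 * ∑' n : ℕ,
      (p n * Real.cos (2*π*(n+1)*x) + q n * Real.sin (2*π*(n+1)*x))) :
    I0 f = c0 := by
  have h := int_weight hp hq hfx (w := fun _ => 1) continuous_const (fun y => by norm_num)
  simp only [one_mul] at h
  rw [I0, h]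
  have : ∀ n : ℕ, (p n * (∫ y in (-(1/2):ℝ)..(1/2), Real.cos (2*π*(n+1)*y))
      + q n * (∫ y in (-(1/2):ℝ)..(1/2), Real.sin (2*π*(n+1)*y))) = 0 := by
    intro n; rw [nintC, nintS]; ring
  rw [tsum_congr this]
  simp
  norm_num

lemma Cc_eq (hp : Summable fun n => |p n|) (hq : Summable fun n => |q n|)
    (hfx : ∀ x, f x = c0 + 2 * ∑' n : ℕ,
      (p n * Real.cos (2*π*(n+1)*x) + q n * Real.sin (2*π*(n+1)*x)))
    (m : ℕ) : Cc f m = p m := by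
  have h := int_weight hp hq hfx (w := fun y => Real.cos (2*π*(m+1)*y)) (by fun_prop)
    (fun y => Real.abs_cos_le_one _)
  rw [Cc, h, nintC]
  have e : ∀ n : ℕ, (p n * (∫ y in (-(1/2):ℝ)..(1/2), Real.cos (2*π*(m+1)*y) * Real.cos (2*π*(n+1)*y))
      + q n * (∫ y in (-(1/2):ℝ)..(1/2), Real.cos (2*π*(m+1)*y) * Real.sin (2*π*(n+1)*y)))
      = if n = m then p n * (1/2) else 0 := by
    intro n; rw [nCC, nCS]
    rcases eq_or_ne n m with hnm | hnm
    · rw [if_pos hnm, if_pos hnm]; ring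
    · rw [if_neg hnm, if_neg hnm]; ring
  rw [tsum_congr e, tsum_eq_single m (fun n hn => by rw [if_neg hn])]
  rw [if_pos rfl]; ring

lemma Cs_eq (hp : Summable fun n => |p n|) (hq : Summable fun n => |q n|)
    (hfx : ∀ x, f x = c0 + 2 * ∑' n : ℕ,
      (p n * Real.cos (2*π*(n+1)*x) + q n * Real.sin (2*π*(n+1)*x)))
    (m : ℕ) : Cs f m = q m := by
  have h := int_weight hp hq hfx (w := fun y => Real.sin (2*π*(m+1)*y)) (by fun_prop)
    (fun y => Real.abs_sin_le_one _)
  rw [Cs, h, nintS]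
  have e : ∀ n : ℕ, (p n * (∫ y in (-(1/2):ℝ)..(1/2), Real.sin (2*π*(m+1)*y) * Real.cos (2*π*(n+1)*y))
      + q n * (∫ y in (-(1/2):ℝ)..(1/2), Real.sin (2*π*(m+1)*y) * Real.sin (2*π*(n+1)*y)))
      = if n = m then q n * (1/2) else 0 := by
    intro n; rw [nSC, nSS]
    rcases eq_or_ne n m with hnm | hnm
    · rw [if_pos hnm, if_pos hnm]; ring
    · rw [if_neg hnm, if_neg hnm]; ring
  rw [tsum_congr e, tsum_eq_single m (fun n hn => by rw [if_neg hn])]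
  rw [if_pos rfl]; ring

end Fdata



noncomputable def Sfun (μ t : ℝ) (n : ℕ) : ℝ :=
  Real.sinh (π * (n + 1) * (1 - 2 * μ) * t) / Real.sinh (π * (n + 1) * t)

lemma Sfun_abs_le {μ t : ℝ} (ht : 0 < t) (hμ0 : 0 < μ) (hμ1 : μ < 1) (n : ℕ) :
    |Sfun μ t n| ≤ Real.exp ((|1 - 2*μ| - 1) * (π * t)) ^ (n+1) := by
  have hπ := Real.pi_pos
  set c : ℝ := π * ((n:ℝ) + 1) * t with hc
  have hc0 : 0 < c := by rw [hc]; positivity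
  have hq : |1 - 2*μ| < 1 := by rw [abs_lt]; constructor <;> nlinarith
  have hq0 : 0 ≤ |1 - 2*μ| := abs_nonneg _
  set q : ℝ := |1 - 2*μ| with hqdef
  have h1 : |Sfun μ t n| = Real.sinh (q * c) / Real.sinh c := by
    rw [Sfun, abs_div, Real.abs_sinh, Real.abs_sinh, abs_of_pos hc0]
    congr 1
    have : π * ((n:ℝ) + 1) * (1 - 2*μ) * t = (1 - 2*μ) * c := by rw [hc]; ring
    rw [this, abs_mul, abs_of_pos hc0]
  rw [h1]
  have hsc : 0 < Real.sinh c := Real.sinh_pos_iff.mpr hc0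
  have h2 : Real.sinh (q * c) ≤ Real.exp ((q - 1) * c) * Real.sinh c := by
    rw [Real.sinh_eq, Real.sinh_eq]
    have e1 : Real.exp ((q-1)*c) * ((Real.exp c - Real.exp (-c))/2)
        = (Real.exp ((q-1)*c + c) - Real.exp ((q-1)*c + -c))/2 := by
      rw [Real.exp_add, Real.exp_add]; ring
    rw [e1]
    have e2 : Real.exp ((q-1)*c + -c) ≤ Real.exp (-(q*c)) := by
      apply Real.exp_le_exp.mpr; nlinarith
    have e3 : Real.exp ((q-1)*c + c) = Real.exp (q*c) := by congr 1; ring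
    rw [e3]
    linarith
  have h3 : Real.exp ((q - 1) * c) = Real.exp ((q - 1) * (π * t)) ^ (n+1) := by
    rw [← Real.exp_nat_mul]
    congr 1
    rw [hc]; push_cast; ring
  rw [div_le_iff₀ hsc, ← h3]
  linarith

lemma Sfun_summable_abs {μ t : ℝ} (ht : 0 < t) (hμ0 : 0 < μ) (hμ1 : μ < 1) :
    Summable (fun n => |Sfun μ t n|) := by
  have hπ := Real.pi_pos
  set r : ℝ := Real.exp ((|1 - 2*μ| - 1) * (π * t)) with hr
  have hq : |1 - 2*μ| < 1 := by rw [abs_lt]; constructor <;> nlinarith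
  have hr1 : r < 1 := by
    rw [hr, Real.exp_lt_one_iff]
    apply mul_neg_of_neg_of_pos (by linarith) (by positivity)
  have hrs : Summable (fun n : ℕ => r ^ (n+1)) := by
    have h := (summable_geometric_of_lt_one (Real.exp_nonneg _) hr1).mul_left r
    apply h.congr
    intro n; rw [← pow_succ']
  exact Summable.of_nonneg_of_le (fun n => abs_nonneg _) (fun n => Sfun_abs_le ht hμ0 hμ1 n) hrs

noncomputable def aL (L : ℕ) (η t : ℝ) (n : ℕ) : ℝ :=
  ∑ j ∈ Finset.range L, Sfun ((2*(j:ℝ)+1)*η) t n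

noncomputable def bL (L : ℕ) (η t : ℝ) (n : ℕ) : ℝ :=
  (∑ m ∈ Finset.range (L-1), Sfun (2*((m:ℝ)+1)*η) t n) +
    ∑ m ∈ Finset.range L, Sfun (2*((m:ℝ)+1)*η) t n

section Main

variable {L : ℕ} {t η : ℝ}

lemma muA_mem (hη : 0 < η) (hη' : 2 * ((L:ℝ) + 1) * η < 1) {j : ℕ}
    (hj : j < L) : 0 < (2*(j:ℝ)+1)*η ∧ (2*(j:ℝ)+1)*η < 1 := by
  have hjL : (j:ℝ) < L := by exact_mod_cast hj
  have hj0 : (0:ℝ) ≤ j := Nat.cast_nonneg j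
  constructor
  · positivity
  · nlinarith [mul_lt_mul_of_pos_right (show (2*(j:ℝ)+1) < 2*((L:ℝ)+1) by nlinarith) hη]

lemma muB_mem (hη : 0 < η) (hη' : 2 * ((L:ℝ) + 1) * η < 1) {m : ℕ}
    (hm : m < L) : 0 < 2*((m:ℝ)+1)*η ∧ 2*((m:ℝ)+1)*η < 1 := by
  have hmL : (m:ℝ) < L := by exact_mod_cast hm
  have hm0 : (0:ℝ) ≤ m := Nat.cast_nonneg m
  constructor
  · positivity
  · nlinarith [mul_lt_mul_of_pos_right (show (2*((m:ℝ)+1)) < 2*((L:ℝ)+1) by nlinarith) hη]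

lemma aL_summable_abs (ht : 0 < t) (hη : 0 < η)
    (hη' : 2 * ((L:ℝ) + 1) * η < 1) : Summable (fun n => |aL L η t n|) := by
  have h : Summable (fun n => ∑ j ∈ Finset.range L, |Sfun ((2*(j:ℝ)+1)*η) t n|) := by
    apply summable_sum
    intro j hj
    obtain ⟨h0, h1⟩ := muA_mem hη hη' (Finset.mem_range.mp hj)
    exact Sfun_summable_abs ht h0 h1
  apply Summable.of_nonneg_of_le (fun n => abs_nonneg _) _ h
  intro n
  exact Finset.abs_sum_le_sum_abs _ _

lemma bL_summable_abs (ht : 0 < t) (hη : 0 < η)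
    (hη' : 2 * ((L:ℝ) + 1) * η < 1) : Summable (fun n => |bL L η t n|) := by
  have h1 : Summable (fun n => ∑ m ∈ Finset.range (L-1), |Sfun (2*((m:ℝ)+1)*η) t n|) := by
    apply summable_sum
    intro m hm
    have hmL : m < L := lt_of_lt_of_le (Finset.mem_range.mp hm) (Nat.pred_le L)
    obtain ⟨h0, h1⟩ := muB_mem hη hη' hmL
    exact Sfun_summable_abs ht h0 h1
  have h2 : Summable (fun n => ∑ m ∈ Finset.range L, |Sfun (2*((m:ℝ)+1)*η) t n|) := by
    apply summable_sum
    intro m hm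
    obtain ⟨h0, h1⟩ := muB_mem hη hη' (Finset.mem_range.mp hm)
    exact Sfun_summable_abs ht h0 h1
  apply Summable.of_nonneg_of_le (fun n => abs_nonneg _) _ (h1.add h2)
  intro n
  calc |bL L η t n| ≤ |∑ m ∈ Finset.range (L-1), Sfun (2*((m:ℝ)+1)*η) t n|
      + |∑ m ∈ Finset.range L, Sfun (2*((m:ℝ)+1)*η) t n| := abs_add_le _ _
  _ ≤ _ := add_le_add (Finset.abs_sum_le_sum_abs _ _) (Finset.abs_sum_le_sum_abs _ _)

lemma sinh_pair (x d : ℝ) :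
    Real.sinh (x + d) + Real.sinh (x - d) = 2 * Real.sinh x * Real.cosh d := by
  rw [Real.sinh_add, Real.sinh_sub]; ring

lemma sinh_core {L : ℕ} (hL : 1 ≤ L) (T a : ℝ) :
    2 * Real.cosh a * (∑ j ∈ Finset.range L, Real.sinh (T - (2*(j:ℝ)+1)*a))
      = Real.sinh T + ((∑ m ∈ Finset.range (L-1), Real.sinh (T - 2*((m:ℝ)+1)*a)) +
        ∑ m ∈ Finset.range L, Real.sinh (T - 2*((m:ℝ)+1)*a)) := by
  have pair : ∀ j : ℕ, 2 * Real.cosh a * Real.sinh (T - (2*(j:ℝ)+1)*a)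
      = Real.sinh (T - 2*(j:ℝ)*a) + Real.sinh (T - 2*((j:ℝ)+1)*a) := by
    intro j
    have e1 : T - 2*(j:ℝ)*a = (T - (2*(j:ℝ)+1)*a) + a := by ring
    have e2 : T - 2*((j:ℝ)+1)*a = (T - (2*(j:ℝ)+1)*a) - a := by ring
    rw [e1, e2, sinh_pair]; ring
  have hsplit : (∑ j ∈ Finset.range L, Real.sinh (T - 2*(j:ℝ)*a))
      = Real.sinh T + ∑ j ∈ Finset.range (L-1), Real.sinh (T - 2*((j:ℝ)+1)*a) := by
    have hL' : L = (L-1) + 1 := (Nat.succ_pred_eq_of_pos hL).symm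
    conv_lhs => rw [hL']
    rw [Finset.sum_range_succ' (fun j : ℕ => Real.sinh (T - 2*(j:ℝ)*a)) (L-1)]
    have e : ∀ i ∈ Finset.range (L-1),
        Real.sinh (T - 2*((i+1:ℕ):ℝ)*a) = Real.sinh (T - 2*((i:ℝ)+1)*a) := by
      intro i _; congr 1; push_cast; ring
    rw [Finset.sum_congr rfl e]
    norm_num [add_comm]
  rw [Finset.mul_sum, Finset.sum_congr rfl (fun j _ => pair j), Finset.sum_add_distrib, hsplit]
  ring

lemma sum_sinh_pos {L : ℕ} (hL : 1 ≤ L) (T a : ℝ) (hTa : 0 < T - (L:ℝ)*a) :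
    0 < ∑ j ∈ Finset.range L, Real.sinh (T - (2*(j:ℝ)+1)*a) := by
  set f : ℕ → ℝ := fun j => Real.sinh (T - (2*(j:ℝ)+1)*a) with hf
  have hrefl : (∑ j ∈ Finset.range L, f j) = ∑ j ∈ Finset.range L, f (L-1-j) :=
    (Finset.sum_range_reflect f L).symm
  have h2S : 2 * (∑ j ∈ Finset.range L, f j) = ∑ j ∈ Finset.range L, (f j + f (L-1-j)) := by
    rw [Finset.sum_add_distrib, ← hrefl]; ring
  have hpairpos : ∀ j ∈ Finset.range L, 0 < f j + f (L-1-j) := by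
    intro j hj
    have hjL : j < L := Finset.mem_range.mp hj
    have hcast : ((L-1-j : ℕ):ℝ) = (L:ℝ) - 1 - j := by
      have h1 : j ≤ L - 1 := Nat.le_pred_of_lt hjL
      rw [Nat.cast_sub h1, Nat.cast_sub hL]
      norm_num
    have e1 : T - (2*(j:ℝ)+1)*a = (T - (L:ℝ)*a) + ((L:ℝ) - 2*(j:ℝ) - 1)*a := by ring
    have e2 : T - (2*(((L-1-j:ℕ)):ℝ)+1)*a = (T - (L:ℝ)*a) - ((L:ℝ) - 2*(j:ℝ) - 1)*a := by
      rw [hcast]; ring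
    have hfj : f j = Real.sinh ((T - (L:ℝ)*a) + ((L:ℝ) - 2*(j:ℝ) - 1)*a) := by rw [hf, ← e1]
    have hfj' : f (L-1-j) = Real.sinh ((T - (L:ℝ)*a) - ((L:ℝ) - 2*(j:ℝ) - 1)*a) := by
      rw [hf, ← e2]
    rw [hfj, hfj', sinh_pair]
    have hp : 0 < Real.sinh (T - (L:ℝ)*a) * Real.cosh (((L:ℝ) - 2*(j:ℝ) - 1)*a) :=
      mul_pos (Real.sinh_pos_iff.mpr hTa) (Real.cosh_pos _)
    linarith
  have hSpos : 0 < ∑ j ∈ Finset.range L, (f j + f (L-1-j)) :=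
    Finset.sum_pos hpairpos (by simp; omega)
  linarith

lemma aL_eq_div (ht : 0 < t) (n : ℕ) :
    aL L η t n = (∑ j ∈ Finset.range L,
      Real.sinh (π*((n:ℝ)+1)*t - (2*(j:ℝ)+1)*(2*π*((n:ℝ)+1)*η*t))) / Real.sinh (π*((n:ℝ)+1)*t) := by
  rw [aL, Finset.sum_div]
  apply Finset.sum_congr rfl
  intro j _
  rw [Sfun]
  congr 2
  ring

lemma bL_eq_div (ht : 0 < t) (n : ℕ) :
    bL L η t n = ((∑ m ∈ Finset.range (L-1),
        Real.sinh (π*((n:ℝ)+1)*t - 2*((m:ℝ)+1)*(2*π*((n:ℝ)+1)*η*t)))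
      + ∑ m ∈ Finset.range L,
        Real.sinh (π*((n:ℝ)+1)*t - 2*((m:ℝ)+1)*(2*π*((n:ℝ)+1)*η*t))) / Real.sinh (π*((n:ℝ)+1)*t) := by
  rw [bL, add_div, Finset.sum_div, Finset.sum_div]
  congr 1
  · apply Finset.sum_congr rfl
    intro m _
    rw [Sfun]; congr 2; ring
  · apply Finset.sum_congr rfl
    intro m _
    rw [Sfun]; congr 2; ring

lemma key_identity (hL : 1 ≤ L) (ht : 0 < t) (n : ℕ) :
    2 * aL L η t n * Real.cosh (2*π*((n:ℝ)+1)*η*t) = 1 + bL L η t n := by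
  have hπ := Real.pi_pos
  have hT0 : 0 < π*((n:ℝ)+1)*t := by positivity
  have hsinh : Real.sinh (π*((n:ℝ)+1)*t) ≠ 0 := ne_of_gt (Real.sinh_pos_iff.mpr hT0)
  have core := sinh_core hL (π*((n:ℝ)+1)*t) (2*π*((n:ℝ)+1)*η*t)
  rw [aL_eq_div ht n, bL_eq_div ht n]
  linear_combination (Real.sinh (π*((n:ℝ)+1)*t))⁻¹ * core + mul_inv_cancel₀ hsinh

lemma aL_pos (hL : 1 ≤ L) (ht : 0 < t) (hη : 0 < η)
    (hη' : 2 * ((L:ℝ) + 1) * η < 1) (n : ℕ) : 0 < aL L η t n := by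
  have hπ := Real.pi_pos
  have hT0 : 0 < π*((n:ℝ)+1)*t := by positivity
  have hsinh : 0 < Real.sinh (π*((n:ℝ)+1)*t) := Real.sinh_pos_iff.mpr hT0
  rw [aL_eq_div ht n]
  apply div_pos _ hsinh
  apply sum_sinh_pos hL
  have e : π*((n:ℝ)+1)*t - (L:ℝ)*(2*π*((n:ℝ)+1)*η*t) = (π*((n:ℝ)+1)*t) * (1 - 2*(L:ℝ)*η) := by
    ring
  rw [e]
  apply mul_pos hT0
  have hL0 : (0:ℝ) ≤ L := Nat.cast_nonneg L
  nlinarith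

lemma one_add_bL_pos (hL : 1 ≤ L) (ht : 0 < t) (hη : 0 < η)
    (hη' : 2 * ((L:ℝ) + 1) * η < 1) (n : ℕ) : 0 < 1 + bL L η t n := by
  rw [← key_identity hL ht n]
  exact mul_pos (mul_pos (by norm_num) (aL_pos hL ht hη hη' n)) (Real.cosh_pos _)

end Main





lemma PhiDeriv_eq (μ t x : ℝ) : PhiDeriv μ t x
    = -2*π*(1 + 2 * ∑' n : ℕ, Sfun μ t n * Real.cos (2*π*((n:ℝ)+1)*x)) := rfl

lemma summable_mul_cos {A : ℕ → ℝ} (hA : Summable fun n => |A n|) (θ : ℕ → ℝ) :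
    Summable (fun n => A n * Real.cos (θ n)) := by
  apply Summable.of_norm_bounded hA
  intro n
  rw [Real.norm_eq_abs, abs_mul]
  exact (mul_le_mul_of_nonneg_left (Real.abs_cos_le_one _) (abs_nonneg _)).trans
    (by rw [mul_one])

section Main
variable {L : ℕ} {t η : ℝ}

lemma sum_PhiDeriv (k : ℕ) (μs : ℕ → ℝ) (x : ℝ)
    (hsum : ∀ m ∈ Finset.range k,
      Summable fun n => Sfun (μs m) t n * Real.cos (2*π*((n:ℝ)+1)*x)) :
    (∑ m ∈ Finset.range k, PhiDeriv (μs m) t x)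
      = -2*π*((k:ℝ) + 2 * ∑' n : ℕ,
          (∑ m ∈ Finset.range k, Sfun (μs m) t n) * Real.cos (2*π*((n:ℝ)+1)*x)) := by
  have e : ∀ m ∈ Finset.range k, PhiDeriv (μs m) t x
      = -2*π + (-4*π) * ∑' n : ℕ, Sfun (μs m) t n * Real.cos (2*π*((n:ℝ)+1)*x) := by
    intro m _; rw [PhiDeriv_eq]; ring
  rw [Finset.sum_congr rfl e, Finset.sum_add_distrib, Finset.sum_const, ← Finset.mul_sum,
    ← Summable.tsum_finsetSum hsum]
  have e2 : ∀ n : ℕ, (∑ m ∈ Finset.range k, Sfun (μs m) t n) * Real.cos (2*π*((n:ℝ)+1)*x)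
      = ∑ m ∈ Finset.range k, Sfun (μs m) t n * Real.cos (2*π*((n:ℝ)+1)*x) := fun n =>
    Finset.sum_mul _ _ _
  rw [tsum_congr e2, Finset.card_range]
  push_cast
  ring

lemma summable_A_cos (ht : 0 < t) (hη : 0 < η) (hη' : 2 * ((L:ℝ) + 1) * η < 1)
    (k : ℕ) (hk : k ≤ L) (x : ℝ) :
    ∀ m ∈ Finset.range k, Summable fun n => Sfun (2*((m:ℝ)+1)*η) t n
      * Real.cos (2*π*((n:ℝ)+1)*x) := by
  intro m hm
  have hmL : m < L := lt_of_lt_of_le (Finset.mem_range.mp hm) hk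
  obtain ⟨h0, h1⟩ := muB_mem hη hη' hmL
  exact summable_mul_cos (Sfun_summable_abs ht h0 h1) _

lemma lhs_eq (ht : 0 < t) (hη : 0 < η) (hη' : 2 * ((L:ℝ) + 1) * η < 1) (x : ℝ) :
    (∑ j ∈ Finset.range L, PhiDeriv ((2 * (j:ℝ) + 1) * η) t x)
      = -2*π*((L:ℝ) + 2 * ∑' n : ℕ, aL L η t n * Real.cos (2*π*((n:ℝ)+1)*x)) := by
  rw [sum_PhiDeriv L (fun j => (2*(j:ℝ)+1)*η) x]
  · rfl
  · intro j hj
    obtain ⟨h0, h1⟩ := muA_mem hη hη' (Finset.mem_range.mp hj)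
    exact summable_mul_cos (Sfun_summable_abs ht h0 h1) _

lemma Kker_eq (ht : 0 < t) (hη : 0 < η) (hη' : 2 * ((L:ℝ) + 1) * η < 1) (z : ℝ) :
    Kker L η t z = -2*π*((((L-1:ℕ):ℝ) + (L:ℝ))
      + 2 * ∑' n : ℕ, bL L η t n * Real.cos (2*π*((n:ℝ)+1)*z)) := by
  rw [Kker, sum_PhiDeriv (L-1) (fun m => 2*((m:ℝ)+1)*η) z
      (summable_A_cos ht hη hη' (L-1) (Nat.pred_le L) z),
    sum_PhiDeriv L (fun m => 2*((m:ℝ)+1)*η) z (summable_A_cos ht hη hη' L le_rfl z)]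
  have hsum1 : Summable fun n => (∑ m ∈ Finset.range (L-1), Sfun (2*((m:ℝ)+1)*η) t n)
      * Real.cos (2*π*((n:ℝ)+1)*z) := by
    have := summable_A_cos (L := L) ht hη hη' (L-1) (Nat.pred_le L) z
    have h := summable_sum (f := fun (m : ℕ) (n : ℕ) => Sfun (2*((m:ℝ)+1)*η) t n * Real.cos (2*π*((n:ℝ)+1)*z))
      (s := Finset.range (L-1)) this
    apply h.congr
    intro n
    rw [← Finset.sum_mul]
  have hsum2 : Summable fun n => (∑ m ∈ Finset.range L, Sfun (2*((m:ℝ)+1)*η) t n)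
      * Real.cos (2*π*((n:ℝ)+1)*z) := by
    have := summable_A_cos (L := L) ht hη hη' L le_rfl z
    have h := summable_sum (f := fun (m : ℕ) (n : ℕ) => Sfun (2*((m:ℝ)+1)*η) t n * Real.cos (2*π*((n:ℝ)+1)*z))
      (s := Finset.range L) this
    apply h.congr
    intro n
    rw [← Finset.sum_mul]
  have e : ∀ n : ℕ, bL L η t n * Real.cos (2*π*((n:ℝ)+1)*z)
      = (∑ m ∈ Finset.range (L-1), Sfun (2*((m:ℝ)+1)*η) t n) * Real.cos (2*π*((n:ℝ)+1)*z)
        + (∑ m ∈ Finset.range L, Sfun (2*((m:ℝ)+1)*η) t n) * Real.cos (2*π*((n:ℝ)+1)*z) := by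
    intro n; rw [bL]; ring
  rw [tsum_congr e, Summable.tsum_add hsum1 hsum2]
  ring

end Main


lemma cosh_bound (x : ℝ) : 1/(2*Real.cosh x) ≤ Real.exp (-x) := by
  have h : Real.exp x ≤ 2*Real.cosh x := by
    rw [Real.cosh_eq]
    have := Real.exp_pos (-x)
    linarith
  rw [Real.exp_neg]
  rw [inv_eq_one_div]
  exact one_div_le_one_div_of_le (Real.exp_pos x) h

section RS
variable {t η : ℝ}

/-- the natural bound sequence over ℤ -/
noncomputable def uZ (η t : ℝ) (k : ℤ) : ℝ := 1/(2*Real.cosh (2*π*(k:ℝ)*η*t))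

lemma uZ_nonneg (k : ℤ) : 0 ≤ uZ η t k := by
  rw [uZ]
  positivity

lemma term_le_uZ (x : ℝ) (k : ℤ) :
    |Real.cos (2*π*(k:ℝ)*x) / (2*Real.cosh (2*π*(k:ℝ)*η*t))| ≤ uZ η t k := by
  rw [uZ, abs_div, abs_of_pos (by positivity : (0:ℝ) < 2*Real.cosh (2*π*(k:ℝ)*η*t)), div_le_div_iff_of_pos_right]
  · exact Real.abs_cos_le_one _
  · positivity

lemma uZ_nat_le (ht : 0 < t) (hη : 0 < η) (n : ℕ) :
    uZ η t (n : ℤ) ≤ Real.exp (-(2*π*η*t)) ^ n := by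
  have h1 := cosh_bound (2*π*((n:ℤ):ℝ)*η*t)
  rw [uZ]
  refine h1.trans ?_
  rw [← Real.exp_nat_mul]
  apply Real.exp_le_exp.mpr
  push_cast
  ring_nf
  exact le_rfl

lemma summable_uZ_nat (ht : 0 < t) (hη : 0 < η) :
    Summable (fun n : ℕ => uZ η t (n : ℤ)) := by
  have hπ := Real.pi_pos
  have hr : Real.exp (-(2*π*η*t)) < 1 := by
    rw [Real.exp_lt_one_iff]; nlinarith [mul_pos (mul_pos hπ hη) ht]
  exact Summable.of_nonneg_of_le (fun n : ℕ => uZ_nonneg _) (uZ_nat_le ht hη)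
    (summable_geometric_of_lt_one (Real.exp_nonneg _) hr)

lemma uZ_neg (k : ℤ) : uZ η t (-k) = uZ η t k := by
  rw [uZ, uZ]
  congr 1
  push_cast
  rw [show 2*π*(-(k:ℝ))*η*t = -(2*π*(k:ℝ)*η*t) by ring, Real.cosh_neg]

lemma summable_uZ (ht : 0 < t) (hη : 0 < η) : Summable (uZ η t) := by
  apply Summable.of_nat_of_neg_add_one (summable_uZ_nat ht hη)
  have h : ∀ n : ℕ, uZ η t (-((n:ℤ)+1)) = uZ η t ((n+1 : ℕ) : ℤ) := by
    intro n
    rw [show -((n:ℤ)+1) = -(((n+1:ℕ):ℤ)) by push_cast; ring, uZ_neg]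
  rw [funext h]
  exact (summable_uZ_nat ht hη).comp_injective (fun a b => by omega)

lemma summable_rho_term (ht : 0 < t) (hη : 0 < η) (x : ℝ) :
    Summable (fun k : ℤ => Real.cos (2*π*(k:ℝ)*x) / (2*Real.cosh (2*π*(k:ℝ)*η*t))) :=
  Summable.of_norm_bounded (summable_uZ ht hη) (fun k => term_le_uZ x k)

lemma rhoSol_continuous (ht : 0 < t) (hη : 0 < η) : Continuous (rhoSol η t) := by
  apply continuous_tsum (u := uZ η t) (fun k => by fun_prop) (summable_uZ ht hη)
  intro k x
  exact term_le_uZ x k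

/-- coefficients of rhoSol as a ℕ-series -/
noncomputable def rc (η t : ℝ) (n : ℕ) : ℝ := 1/(2*Real.cosh (2*π*((n:ℝ)+1)*η*t))

lemma rc_summable_abs (ht : 0 < t) (hη : 0 < η) : Summable (fun n => |rc η t n|) := by
  have h : ∀ n : ℕ, |rc η t n| = uZ η t ((n+1 : ℕ) : ℤ) := by
    intro n
    rw [rc, uZ, abs_of_pos (by positivity)]
    congr 3
    push_cast; ring
  rw [funext h]
  exact (summable_uZ_nat ht hη).comp_injective (fun a b => by omega)

lemma rhoSol_eq (ht : 0 < t) (hη : 0 < η) (x : ℝ) :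
    rhoSol η t x = 1/2 + 2 * ∑' n : ℕ,
      (rc η t n * Real.cos (2*π*((n:ℝ)+1)*x) + 0 * Real.sin (2*π*((n:ℝ)+1)*x)) := by
  have hZ := summable_rho_term ht hη x
  set h : ℤ → ℝ := fun k => Real.cos (2*π*(k:ℝ)*x) / (2*Real.cosh (2*π*(k:ℝ)*η*t)) with hh
  have hnat : Summable (fun n : ℕ => h (n : ℤ)) := hZ.comp_injective (fun a b => by omega)
  have hneg : ∀ n : ℕ, h (-((n:ℤ)+1)) = h (((n+1:ℕ)):ℤ) := by
    intro n
    rw [hh]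
    simp only []
    rw [show -((n:ℤ)+1) = -(((n+1:ℕ):ℤ)) by push_cast; ring]
    push_cast
    rw [show 2*π*(-((n:ℝ)+1))*x = -(2*π*((n:ℝ)+1)*x) by ring,
      show 2*π*(-((n:ℝ)+1))*η*t = -(2*π*((n:ℝ)+1)*η*t) by ring,
      Real.cos_neg, Real.cosh_neg]
  have hnegsummable : Summable (fun n : ℕ => h (-((n:ℤ)+1))) := by
    rw [funext hneg]
    exact hZ.comp_injective (fun a b => by omega)
  have hsplit : rhoSol η t x = (∑' n : ℕ, h (n:ℤ)) + ∑' n : ℕ, h (-((n:ℤ)+1)) := by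
    rw [rhoSol]
    exact tsum_of_nat_of_neg_add_one hnat hnegsummable
  have hshift : (∑' n : ℕ, h ((n:ℤ))) = h 0 + ∑' n : ℕ, h (((n+1:ℕ)):ℤ) := by
    rw [Summable.tsum_eq_zero_add hnat]
    congr 1
  have hzero : h 0 = 1/2 := by
    rw [hh]; norm_num
  have hg : ∀ n : ℕ, h (((n+1:ℕ)):ℤ)
      = rc η t n * Real.cos (2*π*((n:ℝ)+1)*x) + 0 * Real.sin (2*π*((n:ℝ)+1)*x) := by
    intro n
    rw [hh, rc]
    push_cast
    ring
  rw [hsplit, hshift, funext hneg, hzero, tsum_congr hg]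
  ring

end RS



section Main
variable {L : ℕ} {t η : ℝ}

lemma CcCs_bound (f : ℝ → ℝ) (hf : Continuous f) :
    ∃ M : ℝ, 0 ≤ M ∧ ∀ n, |Cc f n| ≤ M ∧ |Cs f n| ≤ M := by
  obtain ⟨C, hC⟩ := (isCompact_Icc (a := (-(1/2):ℝ)) (b := 1/2)).exists_bound_of_continuousOn
    hf.continuousOn
  have hC0 : 0 ≤ C := le_trans (norm_nonneg _) (hC 0 (by norm_num))
  have key : ∀ w : ℝ → ℝ, (∀ y, |w y| ≤ 1) →
      |∫ y in (-(1/2):ℝ)..(1/2), w y * f y| ≤ C := by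
    intro w hw
    have h := intervalIntegral.norm_integral_le_of_norm_le_const
      (C := C) (f := fun y => w y * f y) (a := (-(1/2):ℝ)) (b := 1/2) ?_
    · rw [Real.norm_eq_abs] at h
      calc |∫ y in (-(1/2):ℝ)..(1/2), w y * f y| ≤ C * |1/2 - (-(1/2) : ℝ)| := h
      _ = C := by norm_num
    · intro y hy
      have hyIcc : y ∈ Set.Icc (-(1/2):ℝ) (1/2) := by
        rw [Set.uIoc_of_le (by norm_num : (-(1/2):ℝ) ≤ 1/2)] at hy
        exact Set.Ioc_subset_Icc_self hy
      rw [Real.norm_eq_abs, abs_mul]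
      calc |w y| * |f y| ≤ 1 * C := by
            apply mul_le_mul (hw y) _ (abs_nonneg _) zero_le_one
            simpa using hC y hyIcc
      _ = C := one_mul _
  exact ⟨C, hC0, fun n => ⟨key _ (fun y => Real.abs_cos_le_one _),
    key _ (fun y => Real.abs_sin_le_one _)⟩⟩

lemma conv_eval (hL : 1 ≤ L) (ht : 0 < t) (hη : 0 < η) (hη' : 2*((L:ℝ)+1)*η < 1)
    (f : ℝ → ℝ) (hf : Continuous f) (x : ℝ) :
    (∫ y in (-(1/2):ℝ)..(1/2), Kker L η t (x - y) * f y)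
      = -2*π*( ((((L-1:ℕ):ℝ) + (L:ℝ))) * I0 f
        + 2 * ∑' n : ℕ, bL L η t n * (Real.cos (2*π*((n:ℝ)+1)*x) * Cc f n
            + Real.sin (2*π*((n:ℝ)+1)*x) * Cs f n)) := by
  have hπ := Real.pi_pos
  have hb := bL_summable_abs ht hη hη'
  set KS : ℝ → ℝ := fun z => ∑' n : ℕ, bL L η t n * Real.cos (2*π*((n:ℝ)+1)*z) with hKSdef
  have hKScont : Continuous KS := by
    apply continuous_tsum (u := fun n => |bL L η t n|) (fun n => by fun_prop) hb
    intro n z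
    rw [Real.norm_eq_abs, abs_mul]
    exact (mul_le_mul_of_nonneg_left (Real.abs_cos_le_one _) (abs_nonneg _)).trans (by rw [mul_one])
  have hKker : ∀ y : ℝ, Kker L η t (x - y) * f y
      = -2*π*((((L-1:ℕ):ℝ) + (L:ℝ)) * f y) + (-4*π) * (KS (x-y) * f y) := by
    intro y
    rw [Kker_eq ht hη hη' (x - y), hKSdef]
    ring
  rw [intervalIntegral.integral_congr (fun y _ => hKker y)]
  have hi1 : IntervalIntegrable (fun y : ℝ => -2*π*((((L-1:ℕ):ℝ) + (L:ℝ)) * f y))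
      volume (-(1/2)) (1/2) := by
    apply Continuous.intervalIntegrable
    exact continuous_const.mul (continuous_const.mul hf)
  have hi2 : IntervalIntegrable (fun y : ℝ => -4*π*(KS (x-y) * f y)) volume (-(1/2)) (1/2) := by
    apply Continuous.intervalIntegrable
    exact continuous_const.mul (((hKScont.comp (continuous_const.sub continuous_id)).mul hf))
  rw [intervalIntegral.integral_add hi1 hi2,
    intervalIntegral.integral_const_mul, intervalIntegral.integral_const_mul,
    intervalIntegral.integral_const_mul]
  obtain ⟨M, hC⟩ := (isCompact_Icc (a := (-(1/2):ℝ)) (b := 1/2)).exists_bound_of_continuousOn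
    hf.continuousOn
  have hM0 : 0 ≤ M := le_trans (norm_nonneg _) (hC 0 (by norm_num))
  have hmain : (∫ y in (-(1/2):ℝ)..(1/2), KS (x-y) * f y)
      = ∑' n : ℕ, bL L η t n * (Real.cos (2*π*((n:ℝ)+1)*x) * Cc f n
          + Real.sin (2*π*((n:ℝ)+1)*x) * Cs f n) := by
    have e : ∀ y : ℝ, KS (x-y) * f y
        = ∑' n : ℕ, bL L η t n * Real.cos (2*π*((n:ℝ)+1)*(x-y)) * f y := by
      intro y
      rw [hKSdef]
      simp only []
      rw [← tsum_mul_right]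
    rw [intervalIntegral.integral_congr (fun y _ => e y)]
    rw [swap_integral (fun n => by fun_prop) (hb.mul_right M)]
    · apply tsum_congr
      intro n
      have ecos : ∀ y : ℝ, bL L η t n * Real.cos (2*π*((n:ℝ)+1)*(x-y)) * f y
          = bL L η t n * (Real.cos (2*π*((n:ℝ)+1)*x) * (Real.cos (2*π*((n:ℝ)+1)*y) * f y))
            + bL L η t n * (Real.sin (2*π*((n:ℝ)+1)*x) * (Real.sin (2*π*((n:ℝ)+1)*y) * f y)) := by
        intro y
        rw [show 2*π*((n:ℝ)+1)*(x-y) = 2*π*((n:ℝ)+1)*x - 2*π*((n:ℝ)+1)*y by ring, Real.cos_sub]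
        ring
      rw [intervalIntegral.integral_congr (fun y _ => ecos y),
        intervalIntegral.integral_add
          (f := fun y => bL L η t n * (Real.cos (2*π*((n:ℝ)+1)*x) * (Real.cos (2*π*((n:ℝ)+1)*y) * f y)))
          (g := fun y => bL L η t n * (Real.sin (2*π*((n:ℝ)+1)*x) * (Real.sin (2*π*((n:ℝ)+1)*y) * f y)))
          ((continuous_const.mul (continuous_const.mul ((by fun_prop : Continuous fun y:ℝ => Real.cos (2*π*((n:ℝ)+1)*y)).mul hf))).intervalIntegrable _ _)
          ((continuous_const.mul (continuous_const.mul ((by fun_prop : Continuous fun y:ℝ => Real.sin (2*π*((n:ℝ)+1)*y)).mul hf))).intervalIntegrable _ _),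
        intervalIntegral.integral_const_mul, intervalIntegral.integral_const_mul,
        intervalIntegral.integral_const_mul, intervalIntegral.integral_const_mul]
      rw [Cc, Cs]
      ring
    · intro n y hy
      have hyIcc : y ∈ Set.Icc (-(1/2):ℝ) (1/2) := Set.Ioc_subset_Icc_self hy
      have hfy : |f y| ≤ M := by simpa using hC y hyIcc
      rw [abs_mul, abs_mul]
      calc |bL L η t n| * |Real.cos (2*π*((n:ℝ)+1)*(x-y))| * |f y|
          ≤ |bL L η t n| * 1 * M := by
            apply mul_le_mul _ hfy (abs_nonneg _) (by positivity)
            exact mul_le_mul_of_nonneg_left (Real.abs_cos_le_one _) (abs_nonneg _)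
      _ = |bL L η t n| * M := by ring
  rw [hmain, I0]
  ring

lemma solves_iff (hL : 1 ≤ L) (ht : 0 < t) (hη : 0 < η) (hη' : 2*((L:ℝ)+1)*η < 1)
    (f : ℝ → ℝ) (hf : Continuous f) :
    SolvesBetheEq L η t f ↔ ∀ x, f x = ((L:ℝ) - (((L-1:ℕ):ℝ) + (L:ℝ)) * I0 f)
      + 2 * ∑' n : ℕ, ((aL L η t n - bL L η t n * Cc f n) * Real.cos (2*π*((n:ℝ)+1)*x)
          + (-(bL L η t n * Cs f n)) * Real.sin (2*π*((n:ℝ)+1)*x)) := by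
  unfold SolvesBetheEq
  apply forall_congr'
  intro x
  rw [lhs_eq ht hη hη' x, conv_eval hL ht hη hη' f hf x]
  have hA : Summable (fun n => aL L η t n * Real.cos (2*π*((n:ℝ)+1)*x)) :=
    summable_mul_cos (aL_summable_abs ht hη hη') _
  obtain ⟨M, hM0, hM⟩ := CcCs_bound f hf
  have hB : Summable (fun n => bL L η t n * (Real.cos (2*π*((n:ℝ)+1)*x) * Cc f n
      + Real.sin (2*π*((n:ℝ)+1)*x) * Cs f n)) := by
    apply Summable.of_norm_bounded ((bL_summable_abs ht hη hη').mul_right (2*M))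
    intro n
    rw [Real.norm_eq_abs, abs_mul]
    apply mul_le_mul_of_nonneg_left _ (abs_nonneg _)
    calc |Real.cos (2*π*((n:ℝ)+1)*x) * Cc f n + Real.sin (2*π*((n:ℝ)+1)*x) * Cs f n|
        ≤ |Real.cos (2*π*((n:ℝ)+1)*x) * Cc f n| + |Real.sin (2*π*((n:ℝ)+1)*x) * Cs f n| :=
          abs_add_le _ _
    _ ≤ 1 * M + 1 * M := by
        apply add_le_add
        · rw [abs_mul]
          exact mul_le_mul (Real.abs_cos_le_one _) (hM n).1 (abs_nonneg _) zero_le_one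
        · rw [abs_mul]
          exact mul_le_mul (Real.abs_sin_le_one _) (hM n).2 (abs_nonneg _) zero_le_one
    _ = 2*M := by ring
  have htsub : (∑' n : ℕ, ((aL L η t n - bL L η t n * Cc f n) * Real.cos (2*π*((n:ℝ)+1)*x)
          + (-(bL L η t n * Cs f n)) * Real.sin (2*π*((n:ℝ)+1)*x)))
      = (∑' n : ℕ, aL L η t n * Real.cos (2*π*((n:ℝ)+1)*x))
        - ∑' n : ℕ, bL L η t n * (Real.cos (2*π*((n:ℝ)+1)*x) * Cc f n
            + Real.sin (2*π*((n:ℝ)+1)*x) * Cs f n) := by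
    rw [← Summable.tsum_sub hA hB]
    exact tsum_congr (fun n => by ring)
  have hne : (-2*π : ℝ) ≠ 0 := by
    have := Real.pi_ne_zero
    intro h
    apply this
    nlinarith
  constructor
  · intro h
    have h2 : (-2*π) * ((L:ℝ) + 2*∑' n : ℕ, aL L η t n * Real.cos (2*π*((n:ℝ)+1)*x))
        = (-2*π) * (f x + ((((L-1:ℕ):ℝ) + (L:ℝ)) * I0 f
          + 2*∑' n : ℕ, bL L η t n * (Real.cos (2*π*((n:ℝ)+1)*x) * Cc f n
            + Real.sin (2*π*((n:ℝ)+1)*x) * Cs f n))) := by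
      linear_combination h
    have h3 := mul_left_cancel₀ hne h2
    rw [htsub]
    linear_combination (-1 : ℝ) * h3
  · intro h
    rw [htsub] at h
    linear_combination (2*π) * h

end Main

end RhoAux

open RhoAux in
/-- The unique (continuous, period-1) solution of the ground-state integral equation is
`ρ(x) = ∑_{n∈ℤ} e^{2πinx}/(2 cosh(2πnηt))`. Here `ℓ = L/2` is a positive half-integer
and `2(2ℓ+1)η < 1`. -/
theorem rho_unique_solution (L : ℕ) (hL : 1 ≤ L) (t η : ℝ) (ht : 0 < t) (hη : 0 < η)
    (hη' : 2 * (L + 1) * η < 1) :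
    SolvesBetheEq L η t (rhoSol η t) ∧
      ∀ ρ : ℝ → ℝ, Continuous ρ → (∀ x, ρ (x + 1) = ρ x) →
        SolvesBetheEq L η t ρ → ρ = rhoSol η t := by
  have hη'' : 2 * ((L:ℝ) + 1) * η < 1 := hη'
  have hσcont := rhoSol_continuous (η := η) ht hη
  have hp := rc_summable_abs (η := η) ht hη
  have hq : Summable (fun n : ℕ => |(0:ℝ)|) := by simpa using summable_zero
  have hrfx : ∀ x, rhoSol η t x = 1/2 + 2 * ∑' n : ℕ,
      (rc η t n * Real.cos (2*π*((n:ℝ)+1)*x) + 0 * Real.sin (2*π*((n:ℝ)+1)*x)) :=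
    rhoSol_eq ht hη
  have hI0σ : I0 (rhoSol η t) = 1/2 := I0_eq hp hq hrfx
  have hCcσ : ∀ m, Cc (rhoSol η t) m = rc η t m := Cc_eq hp hq hrfx
  have hCsσ : ∀ m, Cs (rhoSol η t) m = 0 := Cs_eq hp hq hrfx
  have hex : SolvesBetheEq L η t (rhoSol η t) := by
    rw [solves_iff hL ht hη hη'' (rhoSol η t) hσcont]
    intro x
    rw [hrfx x, hI0σ]
    have hterm : ∀ n : ℕ, ((aL L η t n - bL L η t n * Cc (rhoSol η t) n)
          * Real.cos (2*π*((n:ℝ)+1)*x)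
        + (-(bL L η t n * Cs (rhoSol η t) n)) * Real.sin (2*π*((n:ℝ)+1)*x))
        = rc η t n * Real.cos (2*π*((n:ℝ)+1)*x) + 0 * Real.sin (2*π*((n:ℝ)+1)*x) := by
      intro n
      rw [hCcσ n, hCsσ n]
      have hid := key_identity (η := η) hL ht n
      have hch : (0:ℝ) < Real.cosh (2*π*((n:ℝ)+1)*η*t) := Real.cosh_pos _
      have hcoef : aL L η t n - bL L η t n * rc η t n = rc η t n := by
        rw [rc]
        field_simp
        linear_combination hid
      linear_combination Real.cos (2*π*((n:ℝ)+1)*x) * hcoef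
    rw [tsum_congr hterm]
    have hcst : ((L:ℝ) - (((L-1:ℕ):ℝ) + (L:ℝ)) * (1/2)) = 1/2 := by
      rw [Nat.cast_sub hL]
      push_cast
      ring
    rw [hcst]
  refine ⟨hex, ?_⟩
  intro ρ hρcont hρper hρsolves
  have hrep1 := (solves_iff hL ht hη hη'' ρ hρcont).mp hρsolves
  have hrep2 := (solves_iff hL ht hη hη'' (rhoSol η t) hσcont).mp hex
  set σ := rhoSol η t with hσdef
  -- linearity of the Fourier data
  have hI0δ : I0 (fun y => ρ y - σ y) = I0 ρ - I0 σ := by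
    rw [I0, I0, I0]
    exact intervalIntegral.integral_sub (hρcont.intervalIntegrable _ _)
      (hσcont.intervalIntegrable _ _)
  have hCcδ : ∀ n, Cc (fun y => ρ y - σ y) n = Cc ρ n - Cc σ n := by
    intro n
    rw [Cc, Cc, Cc, ← intervalIntegral.integral_sub
      (f := fun y => Real.cos (2*π*((n:ℝ)+1)*y) * ρ y) (g := fun y => Real.cos (2*π*((n:ℝ)+1)*y) * σ y)
      (((by fun_prop : Continuous fun y:ℝ => Real.cos (2*π*((n:ℝ)+1)*y)).mul hρcont).intervalIntegrable _ _)
      (((by fun_prop : Continuous fun y:ℝ => Real.cos (2*π*((n:ℝ)+1)*y)).mul hσcont).intervalIntegrable _ _)]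
    apply intervalIntegral.integral_congr
    intro y _
    ring
  have hCsδ : ∀ n, Cs (fun y => ρ y - σ y) n = Cs ρ n - Cs σ n := by
    intro n
    rw [Cs, Cs, Cs, ← intervalIntegral.integral_sub
      (f := fun y => Real.sin (2*π*((n:ℝ)+1)*y) * ρ y) (g := fun y => Real.sin (2*π*((n:ℝ)+1)*y) * σ y)
      (((by fun_prop : Continuous fun y:ℝ => Real.sin (2*π*((n:ℝ)+1)*y)).mul hρcont).intervalIntegrable _ _)
      (((by fun_prop : Continuous fun y:ℝ => Real.sin (2*π*((n:ℝ)+1)*y)).mul hσcont).intervalIntegrable _ _)]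
    apply intervalIntegral.integral_congr
    intro y _
    ring
  -- summability of representation coefficients
  obtain ⟨Mρ, hMρ0, hMρ⟩ := CcCs_bound ρ hρcont
  obtain ⟨Mσ, hMσ0, hMσ⟩ := CcCs_bound σ hσcont
  have hbabs := bL_summable_abs (L := L) (η := η) ht hη hη''
  have haabs := aL_summable_abs (L := L) (η := η) ht hη hη''
  have hsumP : ∀ (g : ℝ → ℝ) (Mg : ℝ), 0 ≤ Mg → (∀ n, |Cc g n| ≤ Mg ∧ |Cs g n| ≤ Mg) →
      ∀ x : ℝ,
      Summable (fun n => (aL L η t n - bL L η t n * Cc g n) * Real.cos (2*π*((n:ℝ)+1)*x)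
        + (-(bL L η t n * Cs g n)) * Real.sin (2*π*((n:ℝ)+1)*x)) := by
    intro g Mg hMg0 hMg x
    apply Summable.of_norm_bounded ((haabs.add (hbabs.mul_right Mg)).add (hbabs.mul_right Mg))
    intro n
    rw [Real.norm_eq_abs]
    refine (trig_term_bound (fun n => aL L η t n - bL L η t n * Cc g n)
      (fun n => -(bL L η t n * Cs g n)) n x).trans ?_
    apply add_le_add
    · refine (abs_sub _ _).trans ?_
      apply add_le_add le_rfl
      rw [abs_mul]
      exact mul_le_mul_of_nonneg_left (hMg n).1 (abs_nonneg _)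
    · rw [abs_neg, abs_mul]
      exact mul_le_mul_of_nonneg_left (hMg n).2 (abs_nonneg _)
  have hPρ := hsumP ρ Mρ hMρ0 hMρ
  have hPσ := hsumP σ Mσ hMσ0 hMσ
  have hδx : ∀ x, (fun y => ρ y - σ y) x
      = (-((((L-1:ℕ):ℝ) + (L:ℝ)) * I0 (fun y => ρ y - σ y)))
      + 2 * ∑' n : ℕ, ((-(bL L η t n * Cc (fun y => ρ y - σ y) n)) * Real.cos (2*π*((n:ℝ)+1)*x)
          + (-(bL L η t n * Cs (fun y => ρ y - σ y) n)) * Real.sin (2*π*((n:ℝ)+1)*x)) := by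
    intro x
    have h1 := hrep1 x
    have h2 := hrep2 x
    have hts : (∑' n : ℕ,
          ((-(bL L η t n * Cc (fun y => ρ y - σ y) n)) * Real.cos (2*π*((n:ℝ)+1)*x)
          + (-(bL L η t n * Cs (fun y => ρ y - σ y) n)) * Real.sin (2*π*((n:ℝ)+1)*x)))
        = (∑' n : ℕ, ((aL L η t n - bL L η t n * Cc ρ n) * Real.cos (2*π*((n:ℝ)+1)*x)
            + (-(bL L η t n * Cs ρ n)) * Real.sin (2*π*((n:ℝ)+1)*x)))
          - ∑' n : ℕ, ((aL L η t n - bL L η t n * Cc σ n) * Real.cos (2*π*((n:ℝ)+1)*x)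
            + (-(bL L η t n * Cs σ n)) * Real.sin (2*π*((n:ℝ)+1)*x)) := by
      rw [← Summable.tsum_sub (hPρ x) (hPσ x)]
      apply tsum_congr
      intro n
      rw [hCcδ n, hCsδ n]
      ring
    show ρ x - σ x = _
    rw [hts, hI0δ, h1, h2]
    ring
  have hpδ : Summable (fun n => |(fun n => -(bL L η t n * Cc (fun y => ρ y - σ y) n)) n|) := by
    apply Summable.of_nonneg_of_le (fun n => abs_nonneg _) _ (hbabs.mul_right (Mρ + Mσ))
    intro n
    simp only [abs_neg, abs_mul]
    rw [hCcδ n]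
    apply mul_le_mul_of_nonneg_left _ (abs_nonneg _)
    exact (abs_sub _ _).trans (add_le_add (hMρ n).1 (hMσ n).1)
  have hqδ : Summable (fun n => |(fun n => -(bL L η t n * Cs (fun y => ρ y - σ y) n)) n|) := by
    apply Summable.of_nonneg_of_le (fun n => abs_nonneg _) _ (hbabs.mul_right (Mρ + Mσ))
    intro n
    simp only [abs_neg, abs_mul]
    rw [hCsδ n]
    apply mul_le_mul_of_nonneg_left _ (abs_nonneg _)
    exact (abs_sub _ _).trans (add_le_add (hMρ n).2 (hMσ n).2)
  have hI0e := I0_eq hpδ hqδ hδx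
  have hcst1 : (1:ℝ) + (((L-1:ℕ):ℝ) + (L:ℝ)) = 2*(L:ℝ) := by
    rw [Nat.cast_sub hL]; push_cast; ring
  have hL1 : (1:ℝ) ≤ (L:ℝ) := by exact_mod_cast hL
  have hI00 : I0 (fun y => ρ y - σ y) = 0 := by
    have hz : ((1:ℝ) + (((L-1:ℕ):ℝ) + (L:ℝ))) * I0 (fun y => ρ y - σ y) = 0 := by
      linear_combination hI0e
    have hne : ((1:ℝ) + (((L-1:ℕ):ℝ) + (L:ℝ))) ≠ 0 := by
      rw [hcst1]; nlinarith
    exact (mul_eq_zero.mp hz).resolve_left hne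
  have hCce := Cc_eq hpδ hqδ hδx
  have hCse := Cs_eq hpδ hqδ hδx
  have hCc0 : ∀ n, Cc (fun y => ρ y - σ y) n = 0 := by
    intro n
    have hz : (1 + bL L η t n) * Cc (fun y => ρ y - σ y) n = 0 := by
      linear_combination hCce n
    exact (mul_eq_zero.mp hz).resolve_left (one_add_bL_pos hL ht hη hη'' n).ne'
  have hCs0 : ∀ n, Cs (fun y => ρ y - σ y) n = 0 := by
    intro n
    have hz : (1 + bL L η t n) * Cs (fun y => ρ y - σ y) n = 0 := by
      linear_combination hCse n
    exact (mul_eq_zero.mp hz).resolve_left (one_add_bL_pos hL ht hη hη'' n).ne'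
  funext x
  have hfin := hδx x
  have hzero : ∀ n : ℕ,
      ((-(bL L η t n * Cc (fun y => ρ y - σ y) n)) * Real.cos (2*π*((n:ℝ)+1)*x)
        + (-(bL L η t n * Cs (fun y => ρ y - σ y) n)) * Real.sin (2*π*((n:ℝ)+1)*x)) = 0 := by
    intro n
    rw [hCc0 n, hCs0 n]
    ring
  rw [hI00, tsum_congr hzero, tsum_zero] at hfin
  have hdone : ρ x - σ x = 0 := by
    simpa using hfin
  linarith
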